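/- arXiv:2208.04789 — 2 statements merged into one kernel-verified Lean document; each statement's English description precedes it below -/
import Mathlib

section
/- A bipartite pure density matrix ρ = |ψ⟩⟨ψ| on ℂ^{d_A} ⊗ ℂ^{d_B} is a product state, i.e., ρ = ρ_A ⊗ ρ_B where ρ_A and ρ_B are its partial traces, if and only if its correlation coefficients factorize: λ_{ij}^{kl} = α_{ij}·β_{kl} for all (i,j) ≠ (0,0) and (k,l) ≠ (0,0), where α_{ij} = Tr(ρ·(W_{ij}^† ⊗ I)), β_{kl} = Tr(ρ·(I ⊗ W_{kl}^†)), and λ_{ij}^{kl} = Tr(ρ·(W_{ij}^† ⊗ W_{kl}^†)), with ⊗ the Kronecker product. -/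
/-!
The Weyl operators `W_{nm} ⊗ W_{kl}` form an orthogonal basis of the operators on
`ℂ^{d_A} ⊗ ℂ^{d_B}`: the coefficient `tr(M (W_{nm}ᴴ ⊗ W_{kl}ᴴ))` is the two-dimensional discrete
Fourier transform, in the variable `(a, b)`, of the diagonal `M (a, b) (a + m, b + l)`, so a
matrix all of whose Weyl coefficients vanish is zero. The coefficients of `ρ_A ⊗ ρ_B` are the
products `α_{nm} β_{kl}`, and since `W_{00} = 1` and `tr ρ = 1` they agree with those of `ρ`
whenever `(n, m) = 0` or `(k, l) = 0`. Hence `ρ = ρ_A ⊗ ρ_B` iff the remaining coefficients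
factorize.
-/

open scoped Matrix ComplexOrder Kronecker

/-- The Weyl operator `W_{n m}` on a `d`-dimensional Hilbert space:
`(W_{n m})_{k, k'} = exp(2πi·k·n/d)` if `k' = k + m` (mod `d`), and `0` otherwise. -/
noncomputable def Weyl (d : ℕ) (n m : ZMod d) : Matrix (ZMod d) (ZMod d) ℂ :=
  Matrix.of fun k k' =>
    if k' = k + m then Complex.exp (2 * Real.pi * Complex.I * (k.val * n.val : ℕ) / d) else 0

open Matrix ZMod

namespace Matrix

variable {ι κ R : Type*} [Fintype ι] [Fintype κ]

-- `partialTraceRight` traces out the right factor (`ρ_A = Tr_B ρ`), `partialTraceLeft` the left.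
def partialTraceRight [AddCommMonoid R] (M : Matrix (ι × κ) (ι × κ) R) : Matrix ι ι R :=
  of fun i i' => ∑ j, M (i, j) (i', j)

def partialTraceLeft [AddCommMonoid R] (M : Matrix (ι × κ) (ι × κ) R) : Matrix κ κ R :=
  of fun j j' => ∑ i, M (i, j) (i, j')

variable [Semiring R] (M : Matrix (ι × κ) (ι × κ) R)

theorem trace_mul_kronecker_one [DecidableEq κ] (X : Matrix ι ι R) :
    (M * (X ⊗ₖ (1 : Matrix κ κ R))).trace = (M.partialTraceRight * X).trace := by
  simp only [trace, diag, mul_apply, kroneckerMap_apply, partialTraceRight, of_apply, one_apply,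
    Fintype.sum_prod_type, mul_ite, mul_one, mul_zero, Finset.sum_ite_eq', Finset.mem_univ,
    if_true, Finset.sum_mul]
  exact Finset.sum_congr rfl fun _ _ => Finset.sum_comm

theorem trace_mul_one_kronecker [DecidableEq ι] (Y : Matrix κ κ R) :
    (M * ((1 : Matrix ι ι R) ⊗ₖ Y)).trace = (M.partialTraceLeft * Y).trace := by
  simp only [trace, diag, mul_apply, kroneckerMap_apply, partialTraceLeft, of_apply, one_apply,
    Fintype.sum_prod_type, ite_mul, one_mul, zero_mul, mul_ite, mul_zero, Finset.sum_mul]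
  conv_lhs => enter [2, i, 2, j]; rw [Finset.sum_comm]
  simp only [Finset.sum_ite_eq', Finset.mem_univ, if_true]
  rw [Finset.sum_comm]
  exact Finset.sum_congr rfl fun _ _ => Finset.sum_comm

end Matrix

section Weyl

variable {d dA dB : ℕ} [NeZero d] [NeZero dA] [NeZero dB]

theorem weyl_apply (n m k k' : ZMod d) :
    Weyl d n m k k' = if k' = k + m then stdAddChar (k * n) else 0 := by
  have hkn : k * n = ((k.val * n.val : ℕ) : ZMod d) := by
    push_cast [natCast_zmod_val]; rfl
  rw [Weyl, of_apply, hkn, stdAddChar_apply, toCircle_natCast]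

theorem weyl_zero_zero : Weyl d 0 0 = 1 := by
  ext k k'
  simp [weyl_apply, one_apply, eq_comm]

theorem trace_mul_conjTranspose_weyl_kronecker
    (M : Matrix (ZMod dA × ZMod dB) (ZMod dA × ZMod dB) ℂ) (n m : ZMod dA) (k l : ZMod dB) :
    (M * ((Weyl dA n m)ᴴ ⊗ₖ (Weyl dB k l)ᴴ)).trace =
      ∑ a, ∑ b, stdAddChar (-(a * n)) * stdAddChar (-(b * k)) * M (a, b) (a + m, b + l) := by
  simp only [trace, diag, mul_apply, kroneckerMap_apply, conjTranspose_apply, weyl_apply,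
    Fintype.sum_prod_type, apply_ite star, star_zero, ite_mul, zero_mul, mul_ite, mul_zero,
    Finset.sum_ite_eq', Finset.mem_univ, if_true, AddChar.map_neg_eq_conj, Complex.star_def]
  exact Finset.sum_congr rfl fun _ _ => Finset.sum_congr rfl fun _ _ => mul_comm _ _

theorem eq_zero_of_sum_stdAddChar_mul_stdAddChar_eq_zero (f : ZMod dA → ZMod dB → ℂ)
    (h : ∀ n k, ∑ a, ∑ b, stdAddChar (-(a * n)) * stdAddChar (-(b * k)) * f a b = 0) :
    f = 0 := by
  have h2 : 𝓕 (fun a => 𝓕 (f a)) = 0 := by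
    ext n k
    simp only [dft_apply, Finset.sum_apply, Pi.smul_apply, smul_eq_mul, Finset.mul_sum,
      Pi.zero_apply, ← mul_assoc]
    exact h n k
  funext a
  exact (map_eq_zero_iff _ dft.injective).1 (congrFun ((map_eq_zero_iff _ dft.injective).1 h2) a)

theorem eq_zero_of_forall_trace_mul_conjTranspose_weyl_kronecker_eq_zero
    (M : Matrix (ZMod dA × ZMod dB) (ZMod dA × ZMod dB) ℂ)
    (h : ∀ n m k l, (M * ((Weyl dA n m)ᴴ ⊗ₖ (Weyl dB k l)ᴴ)).trace = 0) : M = 0 := by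
  ext ⟨a, b⟩ ⟨a', b'⟩
  have hdiag := eq_zero_of_sum_stdAddChar_mul_stdAddChar_eq_zero
    (fun x y => M (x, y) (x + (a' - a), y + (b' - b)))
    fun n k => (trace_mul_conjTranspose_weyl_kronecker M n _ k _).symm.trans (h _ _ _ _)
  simpa using congrFun (congrFun hdiag a) b

end Weyl

theorem pure_product_iff_corr_factorizes_general (dA dB : ℕ) [NeZero dA] [NeZero dB]
    (ψ : ZMod dA × ZMod dB → ℂ) (hψ : ∑ x, ‖ψ x‖ ^ 2 = 1)
    (ρ : Matrix (ZMod dA × ZMod dB) (ZMod dA × ZMod dB) ℂ)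
    (hρ : ρ = Matrix.vecMulVec ψ (star ψ)) :
    ρ = (Matrix.of fun i i' : ZMod dA => ∑ j : ZMod dB, ρ (i, j) (i', j)) ⊗ₖ
          (Matrix.of fun j j' : ZMod dB => ∑ i : ZMod dA, ρ (i, j) (i, j')) ↔
    ∀ p : ZMod dA × ZMod dA, p ≠ 0 → ∀ q : ZMod dB × ZMod dB, q ≠ 0 →
      Matrix.trace (ρ * ((Weyl dA p.1 p.2)ᴴ ⊗ₖ (Weyl dB q.1 q.2)ᴴ)) =
        Matrix.trace (ρ * ((Weyl dA p.1 p.2)ᴴ ⊗ₖ (1 : Matrix (ZMod dB) (ZMod dB) ℂ))) *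
          Matrix.trace (ρ * ((1 : Matrix (ZMod dA) (ZMod dA) ℂ) ⊗ₖ (Weyl dB q.1 q.2)ᴴ)) := by
  change ρ = ρ.partialTraceRight ⊗ₖ ρ.partialTraceLeft ↔ _
  have htr : ρ.trace = 1 := by
    rw [hρ, trace_vecMulVec]
    simp only [dotProduct, Pi.star_apply, Complex.star_def, Complex.mul_conj']
    exact_mod_cast hψ
  have hprod : ∀ X Y, (ρ.partialTraceRight ⊗ₖ ρ.partialTraceLeft * (X ⊗ₖ Y)).trace =
      (ρ * (X ⊗ₖ 1)).trace * (ρ * (1 ⊗ₖ Y)).trace := fun X Y => by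
    rw [← mul_kronecker_mul, trace_kronecker, trace_mul_kronecker_one, trace_mul_one_kronecker]
  constructor
  · intro hfac p _ q _
    rw [← hprod, ← hfac]
  · intro h
    refine sub_eq_zero.1 (eq_zero_of_forall_trace_mul_conjTranspose_weyl_kronecker_eq_zero _
      fun n m k l => ?_)
    rw [sub_mul, trace_sub, sub_eq_zero, hprod]
    by_cases hp : (n, m) = 0
    · obtain ⟨rfl, rfl⟩ := Prod.mk_eq_zero.1 hp
      rw [weyl_zero_zero, conjTranspose_one, one_kronecker_one, mul_one, htr, one_mul]
    by_cases hq : (k, l) = 0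
    · obtain ⟨rfl, rfl⟩ := Prod.mk_eq_zero.1 hq
      rw [weyl_zero_zero, conjTranspose_one, one_kronecker_one, mul_one, htr, mul_one]
    exact h (n, m) hp (k, l) hq

/-- a bipartite pure density matrix `ρ = |ψ⟩⟨ψ|` is a product state
`ρ = ρ_A ⊗ ρ_B` (partial traces) iff its correlation coefficients factorize:
`λ_{ij}^{kl} = α_{ij} β_{kl}` for all `(i,j) ≠ 0`, `(k,l) ≠ 0`. -/
theorem pure_product_iff_corr_factorizes (dA dB : ℕ) [NeZero dA] [NeZero dB]
    (hA : 2 ≤ dA) (hB : 2 ≤ dB)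
    (ψ : ZMod dA × ZMod dB → ℂ) (hψ : ∑ x, ‖ψ x‖ ^ 2 = 1)
    (ρ : Matrix (ZMod dA × ZMod dB) (ZMod dA × ZMod dB) ℂ)
    (hρ : ρ = Matrix.vecMulVec ψ (star ψ)) :
    ρ = (Matrix.of fun i i' : ZMod dA => ∑ j : ZMod dB, ρ (i, j) (i', j)) ⊗ₖ
          (Matrix.of fun j j' : ZMod dB => ∑ i : ZMod dA, ρ (i, j) (i, j')) ↔
    ∀ p : ZMod dA × ZMod dA, p ≠ 0 → ∀ q : ZMod dB × ZMod dB, q ≠ 0 →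
      Matrix.trace (ρ * ((Weyl dA p.1 p.2)ᴴ ⊗ₖ (Weyl dB q.1 q.2)ᴴ)) =
        Matrix.trace (ρ * ((Weyl dA p.1 p.2)ᴴ ⊗ₖ (1 : Matrix (ZMod dB) (ZMod dB) ℂ))) *
          Matrix.trace (ρ * ((1 : Matrix (ZMod dA) (ZMod dA) ℂ) ⊗ₖ (Weyl dB q.1 q.2)ᴴ)) :=
  pure_product_iff_corr_factorizes_general dA dB ψ hψ ρ hρ
end

section
/- If the Bell-diagonal two-qubit state ρ = (1/4)·(I ⊗ I + ∑_{i=1}^{3} t_i·σ_i ⊗ σ_i), where σ_1, σ_2, σ_3 are the Pauli matrices, t_1, t_2, t_3 ∈ ℝ, and ρ is a density matrix, is separable, then |t_1| + |t_2| + |t_3| ≤ 1. -/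
open scoped Matrix ComplexOrder Kronecker

/-- The Pauli matrix `σ₁`. -/
def pauli1 : Matrix (ZMod 2) (ZMod 2) ℂ :=
  Matrix.of fun i j => if i = j then 0 else 1

/-- The Pauli matrix `σ₂`. -/
def pauli2 : Matrix (ZMod 2) (ZMod 2) ℂ :=
  Matrix.of fun i j =>
    if i = j then 0 else if i = 0 then -Complex.I else Complex.I

/-- The Pauli matrix `σ₃`. -/
def pauli3 : Matrix (ZMod 2) (ZMod 2) ℂ :=
  Matrix.of fun i j => if i = j then (if i = 0 then 1 else -1) else 0

/-- A bipartite density matrix is separable if it is a finite convex combination of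
Kronecker products of density matrices. -/
def SeparableState (dA dB : ℕ) [NeZero dA] [NeZero dB]
    (ρ : Matrix (ZMod dA × ZMod dB) (ZMod dA × ZMod dB) ℂ) : Prop :=
  ∃ (N : ℕ) (w : Fin N → ℝ) (A : Fin N → Matrix (ZMod dA) (ZMod dA) ℂ)
      (B : Fin N → Matrix (ZMod dB) (ZMod dB) ℂ),
    (∀ s, 0 ≤ w s) ∧ (∑ s, w s) = 1 ∧
    (∀ s, (A s).PosSemidef ∧ (A s).trace = 1) ∧
    (∀ s, (B s).PosSemidef ∧ (B s).trace = 1) ∧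
    ρ = ∑ s, (w s : ℂ) • (A s ⊗ₖ B s)

/-!
For a 2×2 density matrix `A` the numbers `aᵢ = tr (A σᵢ)` are real and, by the identity
`∑ aᵢ² = (tr A)² - 4 det A`, lie in the unit ball. Since `tr ((A ⊗ B)(σᵢ ⊗ σᵢ)) = aᵢ bᵢ` and
`tr (ρ (σᵢ ⊗ σᵢ)) = tᵢ`, a separable decomposition `ρ = ∑ₛ wₛ Aₛ ⊗ Bₛ` gives
`tᵢ = ∑ₛ wₛ aᵢˢ bᵢˢ`, hence `∑ |tᵢ| ≤ ∑ₛ wₛ ∑ᵢ |aᵢˢ bᵢˢ| ≤ ∑ₛ wₛ (|aˢ|² + |bˢ|²) / 2 ≤ 1`.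
-/

open Matrix

theorem Matrix.trace_kronecker_mul_kronecker {R m n : Type*} [CommSemiring R] [Fintype m]
    [Fintype n] (A P : Matrix m m R) (B Q : Matrix n n R) :
    ((A ⊗ₖ B) * (P ⊗ₖ Q)).trace = (A * P).trace * (B * Q).trace := by
  rw [← mul_kronecker_mul, trace_kronecker]

theorem Matrix.IsHermitian.ofReal_re_trace_mul {n : Type*} [Fintype n] {A B : Matrix n n ℂ}
    (hA : A.IsHermitian) (hB : B.IsHermitian) : (((A * B).trace.re : ℝ) : ℂ) = (A * B).trace := by
  rw [← Complex.conj_eq_iff_re, starRingEnd_apply, ← trace_conjTranspose, conjTranspose_mul,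
    hA.eq, hB.eq, trace_mul_comm]

theorem ZMod.sum_two {M : Type*} [AddCommMonoid M] (f : ZMod 2 → M) : ∑ i, f i = f 0 + f 1 :=
  Fin.sum_univ_two f

theorem ZMod.forall_two {p : ZMod 2 → Prop} : (∀ i, p i) ↔ p 0 ∧ p 1 :=
  Fin.forall_fin_two

theorem Matrix.det_zmod_two {R : Type*} [CommRing R] (A : Matrix (ZMod 2) (ZMod 2) R) :
    A.det = A 0 0 * A 1 1 - A 0 1 * A 1 0 :=
  det_fin_two A

def pauli : Fin 3 → Matrix (ZMod 2) (ZMod 2) ℂ := ![pauli1, pauli2, pauli3]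

theorem isHermitian_pauli (i : Fin 3) : (pauli i).IsHermitian := by
  refine IsHermitian.ext ?_
  fin_cases i <;> simp [ZMod.forall_two, pauli, pauli1, pauli2, pauli3]

theorem trace_pauli (i : Fin 3) : (pauli i).trace = 0 := by
  fin_cases i <;> simp [pauli, pauli1, pauli2, pauli3, trace, ZMod.sum_two]

theorem trace_pauli_mul_pauli (i j : Fin 3) :
    (pauli i * pauli j).trace = if i = j then 2 else 0 := by
  fin_cases i <;> fin_cases j <;>
    simp [pauli, pauli1, pauli2, pauli3, trace, mul_apply, ZMod.sum_two] <;> norm_num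

theorem sum_trace_mul_pauli_sq (A : Matrix (ZMod 2) (ZMod 2) ℂ) :
    ∑ i, (A * pauli i).trace ^ 2 = A.trace ^ 2 - 4 * A.det := by
  rw [det_zmod_two]
  simp [Fin.sum_univ_three, pauli, pauli1, pauli2, pauli3, trace, mul_apply, ZMod.sum_two]
  linear_combination (A 0 1 - A 1 0) ^ 2 * Complex.I_sq

theorem Matrix.PosSemidef.sum_sq_re_trace_mul_pauli_le_one {A : Matrix (ZMod 2) (ZMod 2) ℂ}
    (hA : A.PosSemidef) (htr : A.trace = 1) : ∑ i, (A * pauli i).trace.re ^ 2 ≤ 1 := by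
  have hsum : ((∑ i, (A * pauli i).trace.re ^ 2 : ℝ) : ℂ) = 1 - 4 * A.det := by
    push_cast
    simp_rw [hA.isHermitian.ofReal_re_trace_mul (isHermitian_pauli _)]
    rw [sum_trace_mul_pauli_sq, htr, one_pow]
  have hdet : 0 ≤ 4 * A.det := mul_nonneg (by norm_num) hA.det_nonneg
  exact_mod_cast hsum ▸ sub_le_self 1 hdet

theorem Finset.sum_abs_mul_le_one {ι : Type*} (s : Finset ι) {a b : ι → ℝ}
    (ha : ∑ i ∈ s, a i ^ 2 ≤ 1) (hb : ∑ i ∈ s, b i ^ 2 ≤ 1) : ∑ i ∈ s, |a i * b i| ≤ 1 :=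
  calc ∑ i ∈ s, |a i * b i| ≤ ∑ i ∈ s, (a i ^ 2 + b i ^ 2) / 2 := by
        refine sum_le_sum fun i _ => ?_
        rw [abs_mul, ← sq_abs (a i), ← sq_abs (b i)]
        linarith [two_mul_le_add_sq |a i| |b i|]
    _ = ((∑ i ∈ s, a i ^ 2) + ∑ i ∈ s, b i ^ 2) / 2 := by rw [← sum_add_distrib, sum_div]
    _ ≤ 1 := by linarith

theorem SeparableState.sum_abs_re_trace_mul_pauli_kronecker_le_one
    {ρ : Matrix (ZMod 2 × ZMod 2) (ZMod 2 × ZMod 2) ℂ} (h : SeparableState 2 2 ρ) :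
    ∑ i, |(ρ * (pauli i ⊗ₖ pauli i)).trace.re| ≤ 1 := by
  obtain ⟨N, w, A, B, hw0, hw1, hA, hB, rfl⟩ := h
  set a : Fin N → Fin 3 → ℝ := fun s i => (A s * pauli i).trace.re
  set b : Fin N → Fin 3 → ℝ := fun s i => (B s * pauli i).trace.re
  have hcorr (i : Fin 3) :
      ((∑ s, (w s : ℂ) • (A s ⊗ₖ B s)) * (pauli i ⊗ₖ pauli i)).trace.re =
        ∑ s, w s * (a s i * b s i) := by
    simp only [Finset.sum_mul, trace_sum, Complex.re_sum, smul_mul, trace_smul,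
      trace_kronecker_mul_kronecker]
    refine Finset.sum_congr rfl fun s _ => ?_
    rw [← (hA s).1.isHermitian.ofReal_re_trace_mul (isHermitian_pauli i),
      ← (hB s).1.isHermitian.ofReal_re_trace_mul (isHermitian_pauli i)]
    simp [a, b, ← Complex.ofReal_mul]
  simp_rw [hcorr]
  calc ∑ i, |∑ s, w s * (a s i * b s i)| ≤ ∑ i, ∑ s, w s * |a s i * b s i| := by
        refine Finset.sum_le_sum fun i _ => (Finset.abs_sum_le_sum_abs _ _).trans_eq ?_
        simp [abs_mul, abs_of_nonneg (hw0 _)]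
    _ = ∑ s, w s * ∑ i, |a s i * b s i| := by rw [Finset.sum_comm]; simp [Finset.mul_sum]
    _ ≤ ∑ s, w s * 1 := Finset.sum_le_sum fun s _ => mul_le_mul_of_nonneg_left
          (Finset.univ.sum_abs_mul_le_one ((hA s).1.sum_sq_re_trace_mul_pauli_le_one (hA s).2)
            ((hB s).1.sum_sq_re_trace_mul_pauli_le_one (hB s).2)) (hw0 s)
    _ = 1 := by simp [hw1]

noncomputable def bellDiagonal (t : Fin 3 → ℝ) : Matrix (ZMod 2 × ZMod 2) (ZMod 2 × ZMod 2) ℂ :=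
  (4 : ℂ)⁻¹ • (1 ⊗ₖ 1 + ∑ j, (t j : ℂ) • (pauli j ⊗ₖ pauli j))

theorem trace_bellDiagonal_mul_pauli_kronecker (t : Fin 3 → ℝ) (i : Fin 3) :
    (bellDiagonal t * (pauli i ⊗ₖ pauli i)).trace = t i := by
  simp only [bellDiagonal, smul_mul, add_mul, Finset.sum_mul, trace_smul, trace_add, trace_sum,
    trace_kronecker_mul_kronecker, one_mul, trace_pauli, trace_pauli_mul_pauli]
  simp
  ring

theorem bell_diagonal_separable_general (t₁ t₂ t₃ : ℝ)
    (ρ : Matrix (ZMod 2 × ZMod 2) (ZMod 2 × ZMod 2) ℂ)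
    (hρ : ρ = (4 : ℂ)⁻¹ •
      ((1 : Matrix (ZMod 2) (ZMod 2) ℂ) ⊗ₖ (1 : Matrix (ZMod 2) (ZMod 2) ℂ) +
        (t₁ : ℂ) • (pauli1 ⊗ₖ pauli1) + (t₂ : ℂ) • (pauli2 ⊗ₖ pauli2) +
        (t₃ : ℂ) • (pauli3 ⊗ₖ pauli3)))
    (hsep : SeparableState 2 2 ρ) :
    |t₁| + |t₂| + |t₃| ≤ 1 := by
  have hbell : ρ = bellDiagonal ![t₁, t₂, t₃] := by
    simp [hρ, bellDiagonal, Fin.sum_univ_three, pauli, add_assoc]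
  have h := hsep.sum_abs_re_trace_mul_pauli_kronecker_le_one
  simpa [hbell, trace_bellDiagonal_mul_pauli_kronecker, Fin.sum_univ_three] using h

/-- if the Bell-diagonal two-qubit state
`ρ = (1/4)(I ⊗ I + ∑ᵢ tᵢ σᵢ ⊗ σᵢ)` is a separable density matrix, then
`|t₁| + |t₂| + |t₃| ≤ 1`. -/
theorem bell_diagonal_separable (t₁ t₂ t₃ : ℝ)
    (ρ : Matrix (ZMod 2 × ZMod 2) (ZMod 2 × ZMod 2) ℂ)
    (hρ : ρ = (4 : ℂ)⁻¹ •
      ((1 : Matrix (ZMod 2) (ZMod 2) ℂ) ⊗ₖ (1 : Matrix (ZMod 2) (ZMod 2) ℂ) +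
        (t₁ : ℂ) • (pauli1 ⊗ₖ pauli1) + (t₂ : ℂ) • (pauli2 ⊗ₖ pauli2) +
        (t₃ : ℂ) • (pauli3 ⊗ₖ pauli3)))
    (hpsd : ρ.PosSemidef) (htr : ρ.trace = 1)
    (hsep : SeparableState 2 2 ρ) :
    |t₁| + |t₂| + |t₃| ≤ 1 :=
  bell_diagonal_separable_general t₁ t₂ t₃ ρ hρ hsep
end
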